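/- Let S, P_1, P_2 be unital complex algebras, let ω be a linear functional on S, σ_1, σ_2 linear functionals on P_1, P_2, and Θ_1, Θ_2 unital algebra automorphisms of S⊗P_1 and S⊗P_2, with extensions Θ̂_1, Θ̂_2 to S⊗P_1⊗P_2 (Θ̂_1 acting on factors one and two, Θ̂_2 on factors one and three). Then for all C ∈ S, O_1 ∈ P_1 and O_2 ∈ P_2: (ω⊗σ_1⊗σ_2)((Θ̂_1 ∘ Θ̂_2)(C⊗O_1⊗O_2)) = I_2(I_1(ω))(C), where for i = 1,2 the (unnormalized) selective update map is defined by I_i(φ)(C) := (φ⊗σ_i)(Θ_i(C⊗O_i)). In particular, taking O_1 = 1 and O_2 = 1, the combined non-selective update equals the composition of the individual non-selective updates. -/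

import Mathlib

open scoped TensorProduct

noncomputable section

variable {S PA PB : Type*} [Ring S] [Algebra ℂ S]
  [Ring PA] [Algebra ℂ PA] [Ring PB] [Algebra ℂ PB]

/-- The tensor product `ω ⊗ σ` of two linear functionals, determined by
`(ω ⊗ σ)(a ⊗ b) = ω a * σ b`. -/
def tensorFunctional {A B : Type*} [Ring A] [Algebra ℂ A]
    [Ring B] [Algebra ℂ B] (ω : A →ₗ[ℂ] ℂ) (σ : B →ₗ[ℂ] ℂ) :
    A ⊗[ℂ] B →ₗ[ℂ] ℂ :=
  (TensorProduct.lid ℂ ℂ).toLinearMap.comp (TensorProduct.map ω σ)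

/-- The partial trace `id_S ⊗ σ : S ⊗ P →ₗ S`, determined by `a ⊗ b ↦ σ(b) • a`. -/
def idTensorFunctional (S : Type*) [Ring S] [Algebra ℂ S] {P : Type*}
    [Ring P] [Algebra ℂ P] (σ : P →ₗ[ℂ] ℂ) : S ⊗[ℂ] P →ₗ[ℂ] S :=
  (TensorProduct.rid ℂ S).toLinearMap.comp (TensorProduct.map LinearMap.id σ)

/-- The rearrangement isomorphism `(S ⊗ P_A) ⊗ P_B ≃ (S ⊗ P_B) ⊗ P_A`
exchanging the two probe factors. -/
def probeSwap (S PA PB : Type*) [Ring S] [Algebra ℂ S]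
    [Ring PA] [Algebra ℂ PA] [Ring PB] [Algebra ℂ PB] :
    ((S ⊗[ℂ] PA) ⊗[ℂ] PB) ≃ₐ[ℂ] ((S ⊗[ℂ] PB) ⊗[ℂ] PA) :=
  (Algebra.TensorProduct.assoc ℂ ℂ ℂ S PA PB).trans
    ((Algebra.TensorProduct.congr AlgEquiv.refl
        (Algebra.TensorProduct.comm ℂ PA PB)).trans
      (Algebra.TensorProduct.assoc ℂ ℂ ℂ S PB PA).symm)

/-- The extension `Θ̂_A` of an automorphism `Θ_A` of `S ⊗ P_A` to
`(S ⊗ P_A) ⊗ P_B`, acting trivially on `P_B`. -/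
def hatA (ΘA : (S ⊗[ℂ] PA) ≃ₐ[ℂ] (S ⊗[ℂ] PA)) :
    ((S ⊗[ℂ] PA) ⊗[ℂ] PB) ≃ₐ[ℂ] ((S ⊗[ℂ] PA) ⊗[ℂ] PB) :=
  Algebra.TensorProduct.congr ΘA AlgEquiv.refl

/-- The extension `Θ̂_B` of an automorphism `Θ_B` of `S ⊗ P_B` to
`(S ⊗ P_A) ⊗ P_B`, acting on the first and third tensor factors and trivially
on `P_A`. -/
def hatB (ΘB : (S ⊗[ℂ] PB) ≃ₐ[ℂ] (S ⊗[ℂ] PB)) :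
    ((S ⊗[ℂ] PA) ⊗[ℂ] PB) ≃ₐ[ℂ] ((S ⊗[ℂ] PA) ⊗[ℂ] PB) :=
  (probeSwap S PA PB).trans ((Algebra.TensorProduct.congr ΘB AlgEquiv.refl).trans
    (probeSwap S PA PB).symm)

/-- The induced system observable `ε(O) = (id_S ⊗ σ)(Θ (1 ⊗ O))` of a probe
observable `O`. -/
def inducedObservable {P : Type*} [Ring P] [Algebra ℂ P] (σ : P →ₗ[ℂ] ℂ)
    (Θ : (S ⊗[ℂ] P) ≃ₐ[ℂ] (S ⊗[ℂ] P)) (O : P) : S :=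
  idTensorFunctional S σ (Θ ((1 : S) ⊗ₜ[ℂ] O))

/-- The (unnormalised) selective state-update map
`I(φ) : C ↦ (φ ⊗ σ)(Θ (C ⊗ O))` of a probe with observable `O`. -/
def selUpdate {P : Type*} [Ring P] [Algebra ℂ P] (σ : P →ₗ[ℂ] ℂ)
    (Θ : (S ⊗[ℂ] P) ≃ₐ[ℂ] (S ⊗[ℂ] P)) (O : P) (φ : S →ₗ[ℂ] ℂ) : S →ₗ[ℂ] ℂ :=
  (tensorFunctional φ σ).comp (Θ.toLinearMap.comp ((TensorProduct.mk ℂ S P).flip O))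

@[simp]
lemma tensorFunctional_tmul {A B : Type*} [Ring A] [Algebra ℂ A] [Ring B] [Algebra ℂ B]
    (ω : A →ₗ[ℂ] ℂ) (σ : B →ₗ[ℂ] ℂ) (a : A) (b : B) :
    tensorFunctional ω σ (a ⊗ₜ[ℂ] b) = ω a * σ b :=
  rfl

lemma selUpdate_apply {P : Type*} [Ring P] [Algebra ℂ P] (σ : P →ₗ[ℂ] ℂ)
    (Θ : (S ⊗[ℂ] P) ≃ₐ[ℂ] (S ⊗[ℂ] P)) (O : P) (φ : S →ₗ[ℂ] ℂ) (C : S) :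
    selUpdate σ Θ O φ C = tensorFunctional φ σ (Θ (C ⊗ₜ[ℂ] O)) :=
  rfl

@[simp]
lemma probeSwap_tmul (a : S) (b : PA) (c : PB) :
    probeSwap S PA PB ((a ⊗ₜ[ℂ] b) ⊗ₜ[ℂ] c) = (a ⊗ₜ[ℂ] c) ⊗ₜ[ℂ] b :=
  rfl

@[simp]
lemma probeSwap_symm_tmul (a : S) (b : PA) (c : PB) :
    (probeSwap S PA PB).symm ((a ⊗ₜ[ℂ] c) ⊗ₜ[ℂ] b) = (a ⊗ₜ[ℂ] b) ⊗ₜ[ℂ] c := by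
  rw [AlgEquiv.symm_apply_eq, probeSwap_tmul]

@[simp]
lemma hatA_tmul (ΘA : (S ⊗[ℂ] PA) ≃ₐ[ℂ] (S ⊗[ℂ] PA)) (x : S ⊗[ℂ] PA) (c : PB) :
    hatA ΘA (x ⊗ₜ[ℂ] c) = ΘA x ⊗ₜ[ℂ] c :=
  rfl

lemma hatB_tmul (ΘB : (S ⊗[ℂ] PB) ≃ₐ[ℂ] (S ⊗[ℂ] PB)) (a : S) (b : PA) (c : PB) :
    hatB ΘB ((a ⊗ₜ[ℂ] b) ⊗ₜ[ℂ] c) = (probeSwap S PA PB).symm (ΘB (a ⊗ₜ[ℂ] c) ⊗ₜ[ℂ] b) := by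
  rw [hatB, AlgEquiv.trans_apply, AlgEquiv.trans_apply, probeSwap_tmul]
  rfl

/-- `Θ̂_B` leaves `C ⊗ O_A ⊗ O_B` in the form `probeSwap.symm (x ⊗ O_A)`, and `Θ̂_A` does not touch
`P_B`, so on such elements the `S ⊗ P_A` part is evaluated first, yielding the update `I_A(ω)`. -/
lemma tensorFunctional_hatA_probeSwap_symm (ω : S →ₗ[ℂ] ℂ) (σA : PA →ₗ[ℂ] ℂ)
    (σB : PB →ₗ[ℂ] ℂ) (ΘA : (S ⊗[ℂ] PA) ≃ₐ[ℂ] (S ⊗[ℂ] PA)) (O : PA) (x : S ⊗[ℂ] PB) :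
    tensorFunctional (tensorFunctional ω σA) σB (hatA ΘA ((probeSwap S PA PB).symm (x ⊗ₜ[ℂ] O)))
      = tensorFunctional (selUpdate σA ΘA O ω) σB x := by
  induction x using TensorProduct.induction_on with
  | zero => simp
  | tmul a c => simp [selUpdate_apply]
  | add y z hy hz => simp only [TensorProduct.add_tmul, map_add, hy, hz]

/-- The combined (selective or, for `O_1 = O_2 = 1`, non-selective) state
update of two causally ordered measurements is the composition of the
individual update maps:
`(ω ⊗ σ_1 ⊗ σ_2)((Θ̂_1 ∘ Θ̂_2)(C ⊗ O_1 ⊗ O_2)) = I_2(I_1(ω))(C)`. -/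
theorem combined_update_eq_composition
    (ω : S →ₗ[ℂ] ℂ) (σ1 : PA →ₗ[ℂ] ℂ) (σ2 : PB →ₗ[ℂ] ℂ)
    (Θ1 : (S ⊗[ℂ] PA) ≃ₐ[ℂ] (S ⊗[ℂ] PA)) (Θ2 : (S ⊗[ℂ] PB) ≃ₐ[ℂ] (S ⊗[ℂ] PB)) :
    ∀ (C : S) (O1 : PA) (O2 : PB),
    tensorFunctional (tensorFunctional ω σ1) σ2
      ((hatA Θ1) ((hatB Θ2) ((C ⊗ₜ[ℂ] O1) ⊗ₜ[ℂ] O2)))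
    = selUpdate σ2 Θ2 O2 (selUpdate σ1 Θ1 O1 ω) C := by
  intro C O1 O2
  rw [hatB_tmul, tensorFunctional_hatA_probeSwap_symm, selUpdate_apply]

end
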